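/- Suppose f : [0,∞) → ℝ is differentiable, nonnegative, and satisfies f'(t) ≤ −g(t) f(t)^{3/2} where g : [0,∞) → ℝ is continuous, nonnegative, and ∫₀^∞ g = ∞. Then f(t) → 0 as t → ∞; moreover, for t with ∫₀^t g > 2/√(f(0)) (assuming f(0) > 0), one has f(t) ≤ 4 / (∫₀^t g(s)ds)². -/

import Mathlib

open Filter

/-- Quantitative decay for the superlinear differential inequality f' ≤ −g f^{3/2}
with g ≥ 0 of divergent integral: f → 0, and f(t) ≤ 4/(∫₀^t g)² once
∫₀^t g > 2/√(f(0)) (assuming f(0) > 0). -/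
theorem superlinear_decay_rate
    (f g : ℝ → ℝ)
    (hf : Differentiable ℝ f) (hfn : ∀ t ≥ (0 : ℝ), 0 ≤ f t)
    (hg : Continuous g) (hgn : ∀ t ≥ (0 : ℝ), 0 ≤ g t)
    (hgi : Tendsto (fun t => ∫ s in (0 : ℝ)..t, g s) atTop atTop)
    (hineq : ∀ t ≥ (0 : ℝ), deriv f t ≤ -(g t) * f t ^ ((3 : ℝ) / 2)) :
    Tendsto f atTop (nhds 0) ∧
    (0 < f 0 → ∀ t ≥ (0 : ℝ), 2 / Real.sqrt (f 0) < ∫ s in (0 : ℝ)..t, g s →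
      f t ≤ 4 / (∫ s in (0 : ℝ)..t, g s) ^ 2) := by
  set G : ℝ → ℝ := fun t => ∫ s in (0 : ℝ)..t, g s with hGdef
  have hanti : AntitoneOn f (Set.Ici (0:ℝ)) := by
    apply antitoneOn_of_deriv_nonpos (convex_Ici 0) hf.continuous.continuousOn
      hf.differentiableOn
    intro x hx
    rw [interior_Ici] at hx
    have hx0 : (0:ℝ) ≤ x := le_of_lt hx
    have h1 := hineq x hx0
    have h2 : 0 ≤ g x * f x ^ ((3:ℝ)/2) :=
      mul_nonneg (hgn x hx0) (Real.rpow_nonneg (hfn x hx0) _)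
    nlinarith
  have key : 0 < f 0 → ∀ t ≥ (0:ℝ), 2 / Real.sqrt (f 0) < G t → f t ≤ 4 / (G t)^2 := by
    intro hf0 t ht hGt
    have hf0s : 0 < Real.sqrt (f 0) := Real.sqrt_pos.mpr hf0
    have hGpos : 0 < G t := lt_trans (by positivity) hGt
    by_cases hz : ∃ s ∈ Set.Icc (0:ℝ) t, f s = 0
    · obtain ⟨s, hs, hfs⟩ := hz
      have hle : f t ≤ 0 := by
        have := hanti (Set.mem_Ici.mpr hs.1) (Set.mem_Ici.mpr ht) hs.2
        rw [hfs] at this; exact this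
      have h0 : f t = 0 := le_antisymm hle (hfn t ht)
      rw [h0]; positivity
    · push_neg at hz
      have hpos : ∀ s ∈ Set.Icc (0:ℝ) t, 0 < f s := fun s hs =>
        lt_of_le_of_ne (hfn s hs.1) (Ne.symm (hz s hs))
      set φ : ℝ → ℝ := fun s => f s ^ (-(1:ℝ)/2) - (1/2) * ∫ x in (0:ℝ)..s, g x with hφ
      have hder : ∀ s ∈ Set.Icc (0:ℝ) t,
          HasDerivAt φ (deriv f s * (-(1:ℝ)/2) * f s ^ (-(1:ℝ)/2 - 1) - (1/2) * g s) s := by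
        intro s hs
        have h1 : HasDerivAt (fun s => f s ^ (-(1:ℝ)/2))
            (deriv f s * (-(1:ℝ)/2) * f s ^ (-(1:ℝ)/2 - 1)) s :=
          (hf s).hasDerivAt.rpow_const (Or.inl (hpos s hs).ne')
        have h2 : HasDerivAt (fun u => ∫ x in (0:ℝ)..u, g x) (g s) s :=
          intervalIntegral.integral_hasDerivAt_right (hg.intervalIntegrable 0 s)
            (hg.stronglyMeasurableAtFilter _ _) hg.continuousAt
        exact h1.sub (h2.const_mul (1/2))
      have hmono : MonotoneOn φ (Set.Icc (0:ℝ) t) := by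
        apply monotoneOn_of_deriv_nonneg (convex_Icc 0 t)
          (fun s hs => (hder s hs).continuousAt.continuousWithinAt)
          (fun s hs => ((hder s (interior_subset hs)).differentiableAt).differentiableWithinAt)
        intro s hs
        have hs' : s ∈ Set.Icc (0:ℝ) t := interior_subset hs
        rw [(hder s hs').deriv]
        have hfs := hpos s hs'
        have hdf := hineq s hs'.1
        have hne : f s ^ ((3:ℝ)/2) ≠ 0 := (Real.rpow_pos_of_pos hfs _).ne'
        have hE : -(1:ℝ)/2 - 1 = -((3:ℝ)/2) := by norm_num
        rw [hE, Real.rpow_neg hfs.le]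
        have hinv : 0 < (f s ^ ((3:ℝ)/2))⁻¹ := inv_pos.mpr (Real.rpow_pos_of_pos hfs _)
        have hkey : deriv f s * (f s ^ ((3:ℝ)/2))⁻¹ ≤ -(g s) := by
          have := mul_le_mul_of_nonneg_right hdf hinv.le
          rwa [mul_assoc, mul_inv_cancel₀ hne, mul_one] at this
        nlinarith [hkey]
      have h0t : φ 0 ≤ φ t := hmono (Set.left_mem_Icc.mpr ht) (Set.right_mem_Icc.mpr ht) ht
      have h00 : φ 0 = f 0 ^ (-(1:ℝ)/2) := by
        simp [hφ, intervalIntegral.integral_same]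
      have hp0 : 0 < f 0 ^ (-(1:ℝ)/2) := Real.rpow_pos_of_pos hf0 _
      have hu : (1/2) * G t ≤ f t ^ (-(1:ℝ)/2) := by
        rw [h00] at h0t
        simp only [hφ] at h0t
        have : G t = ∫ x in (0:ℝ)..t, g x := rfl
        linarith [h0t]
      have hat : 0 < f t := hpos t ⟨ht, le_refl t⟩
      have hsq0 : 0 < Real.sqrt (f t) := Real.sqrt_pos.mpr hat
      have hsqrt : f t ^ (-(1:ℝ)/2) = (Real.sqrt (f t))⁻¹ := by
        rw [show (-(1:ℝ)/2) = -((1:ℝ)/2) by ring, Real.rpow_neg hat.le, ← Real.sqrt_eq_rpow]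
      rw [hsqrt] at hu
      have h2 : G t * Real.sqrt (f t) ≤ 2 := by
        have := mul_le_mul_of_nonneg_right hu hsq0.le
        rw [inv_mul_cancel₀ hsq0.ne'] at this
        nlinarith
      rw [le_div_iff₀ (by positivity)]
      have hsq : Real.sqrt (f t) * Real.sqrt (f t) = f t := Real.mul_self_sqrt hat.le
      nlinarith [mul_le_mul h2 h2 (by positivity) (by norm_num : (0:ℝ) ≤ 2)]
  constructor
  · by_cases hf0 : 0 < f 0
    · have hG2 : Tendsto (fun t => 4 / (G t)^2) atTop (nhds 0) := by
        have hsq2 : Tendsto (fun t => (G t)^2) atTop atTop := by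
          have := hgi.atTop_mul_atTop₀ hgi
          simpa [sq] using this
        simpa using Tendsto.div_atTop (tendsto_const_nhds (x := (4:ℝ))) hsq2
      apply squeeze_zero' ((eventually_ge_atTop 0).mono (fun t ht => hfn t ht)) _ hG2
      filter_upwards [eventually_ge_atTop (0:ℝ), hgi.eventually_gt_atTop (2 / Real.sqrt (f 0))]
        with t ht hGt
      exact key hf0 t ht hGt
    · have hf00 : f 0 = 0 := le_antisymm (not_lt.mp hf0) (hfn 0 le_rfl)
      have hev : ∀ᶠ t in atTop, (0:ℝ) = f t := by
        filter_upwards [eventually_ge_atTop (0:ℝ)] with t ht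
        exact (le_antisymm
          (hf00 ▸ hanti (Set.mem_Ici.mpr le_rfl) (Set.mem_Ici.mpr ht) ht) (hfn t ht)).symm
      exact Tendsto.congr' hev tendsto_const_nhds
  · exact fun hf0 t ht hGt => key hf0 t ht hGt
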